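/- arXiv:1409.6961 — 2 statements merged into one kernel-verified Lean document; each statement's English description precedes it below -/
import Mathlib

section
/- Let q be a power of a prime and m a positive integer such that every prime factor of q - 1 divides m. Then for every c ∈ F_q \ {0}, the number of primitive elements ξ ∈ F_{q^m} with Tr_{F_{q^m}/F_q}(ξ) = c is Z_{q,m,q^m-1}(c) = ( φ(q^m - 1) - Z_{q,m,q^m-1}(0) )/(q - 1); in particular this value is the same for all nonzero c ∈ F_q. -/
/-!
Write `Q = 1 + q + ⋯ + q ^ (m - 1)`, so that `q ^ m - 1 = Q (q - 1)`. A prime `ℓ ∣ q ^ m - 1`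
either divides `q - 1`, hence `m`, and then `Q ≡ m ≡ 0 (mod ℓ)`; or it divides `Q` directly. The
nonzero elements of `F_q` are the powers of `α ^ Q`, so multiplying by `a ∈ F_q^*` sends
`α ^ k` to `α ^ (k + Q t)`, preserving primitivity, and multiplies the trace by `a`. Hence
`Z(c)` is constant on `F_q^*`, and summing over all `c` gives `φ(q^m - 1) = Z(0) + (q - 1) Z(c)`.
-/

open scoped BigOperators
open scoped Classical

/-- The canonical additive character of a finite field `F` of characteristic `p`:
`z ↦ exp(2πi·Tr_{F/F_p}(z)/p)`. -/
noncomputable def canChar (p : ℕ) (F : Type) [Field F] [Fintype F] [CharP F p] : F → ℂ :=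
  fun z => Complex.exp (2 * Real.pi * Complex.I *
    (((@Algebra.trace (ZMod p) F _ _ (ZMod.algebra F p)) z).val : ℂ) / (p : ℂ))

/-- The Gaussian period `η_k^{(d, #L)}` attached to a generator `α` of `Lˣ`:
the sum of `χ` over the cyclotomic class `α^k⟨α^d⟩`. -/
noncomputable def gaussPeriod (p : ℕ) (L : Type) [Field L] [Fintype L] [CharP L p]
    (α : Lˣ) (d : ℕ) (k : ℤ) : ℂ :=
  ∑ x ∈ Finset.univ.filter (fun x : Lˣ => ∃ i : ℕ, x = α ^ k * (α ^ d) ^ i),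
    canChar p L (x : L)

/-- `Δ_k(N) = ∑_{d ∣ N} μ(d)·η_k^{(d, #L)}`. -/
noncomputable def DeltaSum (p : ℕ) (L : Type) [Field L] [Fintype L] [CharP L p]
    (α : Lˣ) (N : ℕ) (k : ℤ) : ℂ :=
  ∑ d ∈ N.divisors, ((ArithmeticFunction.moebius d : ℤ) : ℂ) * gaussPeriod p L α d k

/-- `ξ` is `N`-free (w.r.t. the fixed generator `α`): `ξ = α^k` for some `k` coprime to `N`. -/
def IsNFree {G : Type} [Group G] (α ξ : G) (N : ℕ) : Prop :=
  ∃ k : ℕ, Nat.Coprime k N ∧ ξ = α ^ k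

/-- `Z_{q,m,N}(c)`: the number of `N`-free elements of `Lˣ` with trace (to `K`) equal to `c`. -/
noncomputable def Zcount (K L : Type) [Field K] [Field L] [Algebra K L]
    (α : Lˣ) (N : ℕ) (c : K) : ℕ :=
  {ξ : Lˣ | IsNFree α ξ N ∧ Algebra.trace K L (ξ : L) = c}.ncard

/-- `P_{q,m,N}(c)`: the number of elements of `Lˣ` of multiplicative order exactly `N`
with trace (to `K`) equal to `c`. -/
noncomputable def Pcount (K L : Type) [Field K] [Field L] [Algebra K L]
    (N : ℕ) (c : K) : ℕ :=
  {ξ : Lˣ | orderOf ξ = N ∧ Algebra.trace K L (ξ : L) = c}.ncard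

/-- The radical of `n`: the product of the distinct prime factors of `n`. -/
def Rad (n : ℕ) : ℕ := ∏ ℓ ∈ n.primeFactors, ℓ

/-- `f_k(N, c, Δ) = ∑_{i=0}^{q-2} conj(χ_q(β^i·c))·Δ_{Qi+k}(N)`, where `β ∈ K` corresponds
to `α^Q` (a generator of `Kˣ`). -/
noncomputable def fsum (p : ℕ) (K L : Type) [Field K] [Fintype K] [CharP K p]
    [Field L] [Fintype L] [CharP L p]
    (α : Lˣ) (β : K) (q Q N : ℕ) (c : K) (k : ℤ) : ℂ :=
  ∑ i ∈ Finset.range (q - 1),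
    (starRingEnd ℂ) (canChar p K (β ^ i * c)) * DeltaSum p L α N ((Q * i : ℕ) + k)


open Finset

theorem Nat.prime_dvd_geom_sum_of_dvd_pow_sub_one {q m ℓ : ℕ} (hq : 1 ≤ q)
    (hdiv : ∀ ℓ : ℕ, ℓ.Prime → ℓ ∣ q - 1 → ℓ ∣ m) (hℓ : ℓ.Prime) (hℓN : ℓ ∣ q ^ m - 1) :
    ℓ ∣ ∑ i ∈ range m, q ^ i := by
  have hmul : (∑ i ∈ range m, q ^ i) * (q - 1) = q ^ m - 1 := geom_sum_mul_of_one_le hq m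
  by_cases hℓq : ℓ ∣ q - 1
  · have hq1 : (q : ZMod ℓ) = 1 := by
      rw [← sub_eq_zero, ← Nat.cast_one, ← Nat.cast_sub hq, ZMod.natCast_eq_zero_iff]
      exact hℓq
    rw [← ZMod.natCast_eq_zero_iff]
    push_cast
    simp only [hq1, one_pow, sum_const, card_range, nsmul_eq_mul, mul_one]
    exact (ZMod.natCast_eq_zero_iff _ _).2 (hdiv ℓ hℓ hℓq)
  · exact (hℓ.dvd_mul.1 (hmul ▸ hℓN)).resolve_right hℓq

theorem Nat.Coprime.add_mul_of_forall_prime_dvd {k N Q : ℕ} (hk : k.Coprime N)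
    (hQ : ∀ ℓ : ℕ, ℓ.Prime → ℓ ∣ N → ℓ ∣ Q) (t : ℕ) : (k + Q * t).Coprime N :=
  Nat.coprime_of_dvd fun ℓ hℓ hℓk hℓN =>
    hℓ.not_dvd_one <| hk ▸ Nat.dvd_gcd
      ((Nat.dvd_add_left ((hQ ℓ hℓ hℓN).mul_right t)).1 hℓk) hℓN

section Group

variable {G : Type} [Group G]

theorem IsNFree.pow_mul_mul {α ξ : G} {N Q : ℕ} (hξ : IsNFree α ξ N)
    (hQ : ∀ ℓ : ℕ, ℓ.Prime → ℓ ∣ N → ℓ ∣ Q) (t : ℕ) : IsNFree α (α ^ (Q * t) * ξ) N := by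
  obtain ⟨k, hk, rfl⟩ := hξ
  exact ⟨k + Q * t, hk.add_mul_of_forall_prime_dvd hQ t, by rw [← pow_add, add_comm]⟩

theorem isNFree_orderOf_iff {α ξ : G} (hα : IsOfFinOrder α) (hξ : ξ ∈ Subgroup.zpowers α) :
    IsNFree α ξ (orderOf α) ↔ orderOf ξ = orderOf α := by
  constructor
  · rintro ⟨k, hk, rfl⟩
    exact hk.symm.orderOf_pow
  · intro hξα
    obtain ⟨k, rfl⟩ := hα.mem_powers_iff_mem_zpowers.2 hξ
    rw [hα.orderOf_pow, Nat.div_eq_self] at hξα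
    exact ⟨k, Nat.Coprime.symm (hξα.resolve_left hα.orderOf_pos.ne'), rfl⟩

theorem exists_eq_pow_mul_of_pow_eq_one {α u : G} {Q d : ℕ} (hα : IsOfFinOrder α)
    (horder : orderOf α = Q * d) (hd : 0 < d) (hu : u ∈ Subgroup.zpowers α) (hud : u ^ d = 1) :
    ∃ t, u = α ^ (Q * t) := by
  obtain ⟨j, rfl⟩ := hα.mem_powers_iff_mem_zpowers.2 hu
  have : Q * d ∣ j * d := horder ▸ orderOf_dvd_of_pow_eq_one (by rwa [← pow_mul] at hud)
  obtain ⟨t, rfl⟩ := Nat.dvd_of_mul_dvd_mul_right hd this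
  exact ⟨t, rfl⟩

theorem ncard_isNFree [Finite G] {α : G} (hα : ∀ x : G, x ∈ Subgroup.zpowers α) :
    {ξ : G | IsNFree α ξ (orderOf α)}.ncard = (orderOf α).totient := by
  have := Fintype.ofFinite G
  have : IsCyclic G := ⟨α, hα⟩
  have hcard : orderOf α = Fintype.card G := by
    rw [orderOf_eq_card_of_forall_mem_zpowers hα, Nat.card_eq_fintype_card]
  rw [← IsCyclic.card_orderOf_eq_totient hcard.dvd, Set.ncard_eq_toFinset_card',
    Set.toFinset_ofPred]
  exact congrArg card (filter_congr fun ξ _ =>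
    isNFree_orderOf_iff (isOfFinOrder_of_finite α) (hα ξ))

end Group

section FiniteField

variable {K L : Type} [Field K] [Fintype K] [Field L] [Fintype L] {q m : ℕ} {α : Lˣ}

theorem orderOf_eq_geom_sum_mul (hq : 1 ≤ q) (hL : Fintype.card L = q ^ m)
    (hα : ∀ x : Lˣ, x ∈ Subgroup.zpowers α) :
    orderOf α = (∑ i ∈ range m, q ^ i) * (q - 1) := by
  rw [geom_sum_mul_of_one_le hq m, orderOf_eq_card_of_forall_mem_zpowers hα,
    Nat.card_eq_fintype_card, Fintype.card_units, hL]

variable [Algebra K L]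

theorem exists_algebraMap_eq_pow_geom_sum_mul (hK : Fintype.card K = q)
    (hL : Fintype.card L = q ^ m) (hα : ∀ x : Lˣ, x ∈ Subgroup.zpowers α) (a : Kˣ) :
    ∃ t, Units.map (algebraMap K L : K →* L) a = α ^ ((∑ i ∈ range m, q ^ i) * t) := by
  have hq : 1 < q := hK ▸ Fintype.one_lt_card
  refine exists_eq_pow_mul_of_pow_eq_one (isOfFinOrder_of_finite α)
    (orderOf_eq_geom_sum_mul hq.le hL hα) (by omega) (hα _) ?_
  rw [← map_pow, ← hK, ← Fintype.card_units, pow_card_eq_one, map_one]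

theorem Zcount_le_Zcount_mul (hK : Fintype.card K = q) (hL : Fintype.card L = q ^ m)
    (hα : ∀ x : Lˣ, x ∈ Subgroup.zpowers α) (hdiv : ∀ ℓ : ℕ, ℓ.Prime → ℓ ∣ q - 1 → ℓ ∣ m)
    (a : Kˣ) (c : K) :
    Zcount K L α (q ^ m - 1) c ≤ Zcount K L α (q ^ m - 1) (a * c) := by
  obtain ⟨t, ht⟩ := exists_algebraMap_eq_pow_geom_sum_mul hK hL hα a
  have hQ : ∀ ℓ : ℕ, ℓ.Prime → ℓ ∣ q ^ m - 1 → ℓ ∣ ∑ i ∈ range m, q ^ i := fun ℓ hℓ =>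
    Nat.prime_dvd_geom_sum_of_dvd_pow_sub_one (hK ▸ Fintype.card_pos) hdiv hℓ
  set u := Units.map (algebraMap K L : K →* L) a
  have hmaps : Set.MapsTo (u * ·)
      {ξ : Lˣ | IsNFree α ξ (q ^ m - 1) ∧ Algebra.trace K L (ξ : L) = c}
      {ξ : Lˣ | IsNFree α ξ (q ^ m - 1) ∧ Algebra.trace K L (ξ : L) = a * c} := by
    rintro ξ ⟨hξ, htr⟩
    refine ⟨ht ▸ hξ.pow_mul_mul hQ t, ?_⟩
    simp only [Units.val_mul, u, Units.coe_map, MonoidHom.coe_coe, ← Algebra.smul_def,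
      map_smul, htr, smul_eq_mul]
  exact Set.ncard_le_ncard_of_injOn _ hmaps (mul_right_injective u).injOn

theorem Zcount_eq_Zcount_one (hK : Fintype.card K = q) (hL : Fintype.card L = q ^ m)
    (hα : ∀ x : Lˣ, x ∈ Subgroup.zpowers α) (hdiv : ∀ ℓ : ℕ, ℓ.Prime → ℓ ∣ q - 1 → ℓ ∣ m)
    {c : K} (hc : c ≠ 0) :
    Zcount K L α (q ^ m - 1) c = Zcount K L α (q ^ m - 1) 1 := by
  refine le_antisymm ?_ ?_
  · simpa [hc] using Zcount_le_Zcount_mul hK hL hα hdiv (Units.mk0 c hc)⁻¹ c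
  · simpa using Zcount_le_Zcount_mul hK hL hα hdiv (Units.mk0 c hc) 1

end FiniteField

theorem sum_Zcount (K L : Type) [Field K] [Fintype K] [Field L] [Finite L] [Algebra K L]
    (α : Lˣ) (N : ℕ) : ∑ c : K, Zcount K L α N c = {ξ : Lˣ | IsNFree α ξ N}.ncard := by
  have := Fintype.ofFinite L
  simp only [Zcount, Set.ncard_eq_toFinset_card', Set.toFinset_ofPred]
  rw [card_eq_sum_card_fiberwise (f := fun ξ : Lˣ => Algebra.trace K L (ξ : L))
    (fun _ _ => mem_univ _)]
  simp only [filter_filter]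

theorem stmt_9_general (m q : ℕ)
    (K L : Type) [Field K] [Fintype K] [Field L] [Fintype L] [Algebra K L]
    (hK : Fintype.card K = q) (hL : Fintype.card L = q ^ m)
    (α : Lˣ) (hα : ∀ x : Lˣ, x ∈ Subgroup.zpowers α)
    (hdiv : ∀ ℓ : ℕ, ℓ.Prime → ℓ ∣ q - 1 → ℓ ∣ m) :
    ∀ c : K, c ≠ 0 →
      (Zcount K L α (q ^ m - 1) c : ℚ) =
        ((Nat.totient (q ^ m - 1) : ℚ) - (Zcount K L α (q ^ m - 1) (0 : K) : ℚ)) /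
          ((q : ℚ) - 1) := by
  intro c hc
  have hq : 1 < q := hK ▸ Fintype.one_lt_card
  have horder : orderOf α = q ^ m - 1 := by
    rw [orderOf_eq_geom_sum_mul hq.le hL hα, geom_sum_mul_of_one_le hq.le]
  have htotal : (q ^ m - 1).totient =
      Zcount K L α (q ^ m - 1) 0 + (q - 1) * Zcount K L α (q ^ m - 1) c := by
    rw [← horder, ← ncard_isNFree hα, ← sum_Zcount K, horder,
      ← add_sum_erase _ _ (mem_univ 0),
      sum_congr rfl fun c' hc' => Zcount_eq_Zcount_one hK hL hα hdiv (ne_of_mem_erase hc'),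
      Zcount_eq_Zcount_one hK hL hα hdiv hc, sum_const, card_erase_of_mem (mem_univ 0),
      card_univ, hK, smul_eq_mul]
  have hq' : (q : ℚ) - 1 ≠ 0 := sub_ne_zero.2 (by exact_mod_cast hq.ne')
  rw [eq_div_iff hq', htotal]
  push_cast [Nat.cast_sub hq.le]
  ring

/-- uniformity for primitive elements when every prime factor of
`q - 1` divides `m`. -/
theorem stmt_9 (p s m q : ℕ) [Fact p.Prime] (hs : 0 < s) (hm : 0 < m)
    (hq : q = p ^ s)
    (K L : Type) [Field K] [Fintype K] [Field L] [Fintype L] [Algebra K L]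
    (hK : Fintype.card K = q) (hL : Fintype.card L = q ^ m)
    (α : Lˣ) (hα : ∀ x : Lˣ, x ∈ Subgroup.zpowers α)
    (hdiv : ∀ ℓ : ℕ, ℓ.Prime → ℓ ∣ q - 1 → ℓ ∣ m) :
    ∀ c : K, c ≠ 0 →
      (Zcount K L α (q ^ m - 1) c : ℚ) =
        ((Nat.totient (q ^ m - 1) : ℚ) - (Zcount K L α (q ^ m - 1) (0 : K) : ℚ)) /
          ((q : ℚ) - 1) :=
  stmt_9_general m q K L hK hL α hα hdiv
end

section
/- Let q be a power of a prime, m a positive integer, and N | q^m - 1 such that every prime divisor of N divides Q = (q^m - 1)/(q - 1). Then for every subfield F_t of F_q and every nonzero c_t ∈ F_t^*, one has Δ_0(N) = Z_{t, m·[F_q:F_t], N}(0) - Z_{t, m·[F_q:F_t], N}(c_t). Furthermore, if t ≠ q, then Δ_0(N) = ( q·Z_{q,m,N}(0) - t·Z_{t, m·[F_q:F_t], N}(0) )/(q - t). -/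
open scoped BigOperators
open scoped Classical

/-!
Möbius inversion over the cyclotomic classes turns `Δ₀(N)` into the sum of the canonical
character `χ` over the `N`-free elements of `F_{q^m}^*`. For an intermediate field `F`, transitivity
of the trace gives `χ(ξ) = ψ(Tr_F ξ)` with `ψ` the canonical character of `F`, so
`Δ₀(N) = ∑_c Z_F(c) ψ(c)`. Every `a ∈ F^*` is `α^j` with `Q ∣ j`, and every prime factor of `N`
divides `Q`, so multiplication by `a` preserves `N`-freeness while scaling traces by `a`: `Z_F` is
constant on `F^*`. Orthogonality of `ψ` then gives `Δ₀(N) = Z_F(0) - Z_F(c)` for `c ≠ 0`, and since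
`∑_c Z_F(c)` is the number of all `N`-free elements, `|F| Z_F(0) = #{N-free} + (|F| - 1) Δ₀(N)`;
subtracting these identities for `F = F_t` and `F = F_q` gives the second formula.
-/
open Finset

section CanonicalCharacter

variable (p : ℕ) [Fact p.Prime] (F : Type) [Field F] [Fintype F] [CharP F p]

noncomputable def canAddChar : AddChar F ℂ :=
  letI := ZMod.algebra F p
  ZMod.stdAddChar.compAddMonoidHom (Algebra.trace (ZMod p) F).toAddMonoidHom

lemma canAddChar_apply (z : F) : canAddChar p F z = canChar p F z := by
  simp [canAddChar, canChar, ZMod.stdAddChar_apply, ZMod.toCircle_apply]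

lemma canAddChar_ne_one : canAddChar p F ≠ 1 := by
  let := ZMod.algebra F p
  obtain ⟨z, hz⟩ := Algebra.trace_surjective (ZMod p) F 1
  intro h
  have h1 := DFunLike.congr_fun h z
  simp only [canAddChar, AddChar.compAddMonoidHom_apply, LinearMap.toAddMonoidHom_coe, hz,
    AddChar.one_apply] at h1
  exact one_ne_zero (ZMod.injective_stdAddChar (h1.trans (AddChar.map_zero_eq_one _).symm))

lemma sum_canChar : ∑ z : F, canChar p F z = 0 := by
  simpa only [canAddChar_apply] using AddChar.sum_eq_zero_of_ne_one (canAddChar_ne_one p F)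

lemma canChar_zero : canChar p F 0 = 1 := by
  rw [← canAddChar_apply, AddChar.map_zero_eq_one]

lemma canChar_algebraTrace (L : Type) [Field L] [Fintype L] [Algebra F L] [CharP L p] (ξ : L) :
    canChar p L ξ = canChar p F (Algebra.trace F L ξ) := by
  let := ZMod.algebra L p
  let := ZMod.algebra F p
  have : IsScalarTower (ZMod p) F L := IsScalarTower.of_algebraMap_eq' (RingHom.ext_zmod _ _)
  rw [canChar, canChar, Algebra.trace_trace]

end CanonicalCharacter

lemma sum_divisors_filter_dvd_moebius {R : Type} [Ring R] {N : ℕ} (hN : N ≠ 0) (k : ℕ) :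
    ∑ d ∈ N.divisors with d ∣ k, ((ArithmeticFunction.moebius d : ℤ) : R) =
      if N.Coprime k then 1 else 0 := by
  have hdiv : {d ∈ N.divisors | d ∣ k} = (N.gcd k).divisors := by
    ext d
    simp only [mem_filter, Nat.mem_divisors, Nat.dvd_gcd_iff, ne_eq,
      Nat.gcd_eq_zero_iff, hN, false_and, not_false_eq_true, and_true]
  rw [hdiv, ← Int.cast_sum, ← ArithmeticFunction.coe_mul_zeta_apply,
    ArithmeticFunction.moebius_mul_coe_zeta, ArithmeticFunction.one_apply]
  split_ifs <;> simp_all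

lemma sum_mul_eq_of_eq_of_ne {ι R : Type} [Fintype ι] [DecidableEq ι] [CommRing R]
    {f : ι → R} {a : ι} {b : R} (hf : ∀ c ≠ a, f c = b) (g : ι → R) :
    ∑ c, f c * g c = b * ∑ c, g c + (f a - b) * g a := by
  calc ∑ c, f c * g c = ∑ c, (b * g c + if c = a then (f a - b) * g c else 0) :=
        sum_congr rfl fun c _ => by
          split_ifs with hc
          · rw [hc]; ring
          · rw [hf c hc, add_zero]
    _ = b * ∑ c, g c + (f a - b) * g a := by
        rw [sum_add_distrib, ← mul_sum, sum_ite_eq', if_pos (mem_univ a)]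

section CyclicGroup

variable {G : Type} [Group G] {α : G}

lemma exists_pow_eq_of_mem_zpowers [Finite G] (hα : ∀ x : G, x ∈ Subgroup.zpowers α) (x : G) :
    ∃ k : ℕ, x = α ^ k := by
  obtain ⟨k, hk⟩ := (mem_powers_iff_mem_zpowers.mpr (hα x) : x ∈ Submonoid.powers α)
  exact ⟨k, hk.symm⟩

lemma exists_pow_eq_pow_pow_iff {d : ℕ} (hd : d ∣ orderOf α) (k : ℕ) :
    (∃ i : ℕ, α ^ k = (α ^ d) ^ i) ↔ d ∣ k := by
  simp only [← pow_mul, pow_eq_pow_iff_modEq]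
  constructor
  · rintro ⟨i, hi⟩
    exact Nat.modEq_zero_iff_dvd.mp ((hi.of_dvd hd).trans (Nat.modEq_zero_iff_dvd.mpr ⟨i, rfl⟩))
  · rintro ⟨i, rfl⟩
    exact ⟨i, rfl⟩

lemma isNFree_pow_iff {N : ℕ} (hN : N ∣ orderOf α) (k : ℕ) :
    IsNFree α (α ^ k) N ↔ N.Coprime k := by
  constructor
  · rintro ⟨k', hk', heq⟩
    have hmod : k ≡ k' [MOD N] := (pow_eq_pow_iff_modEq.mp heq).of_dvd hN
    rw [Nat.coprime_comm, Nat.Coprime, hmod.gcd_eq]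
    exact hk'
  · exact fun h => ⟨k, h.symm, rfl⟩

variable [Finite G] {N Q e : ℕ}

lemma exists_pow_eq_dvd_of_pow_eq_one (hα : ∀ x : G, x ∈ Subgroup.zpowers α)
    (hord : orderOf α = Q * e) {u : G} (hu : u ^ e = 1) :
    ∃ j : ℕ, u = α ^ j ∧ Q ∣ j := by
  obtain ⟨j, rfl⟩ := exists_pow_eq_of_mem_zpowers hα u
  refine ⟨j, rfl, ?_⟩
  have he : e ≠ 0 := right_ne_zero_of_mul (hord ▸ (orderOf_pos α).ne')
  have h : Q * e ∣ j * e := hord ▸ orderOf_dvd_of_pow_eq_one (by rw [pow_mul, hu])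
  exact Nat.dvd_of_mul_dvd_mul_right (Nat.pos_of_ne_zero he) h

lemma IsNFree.mul_of_pow_eq_one (hα : ∀ x : G, x ∈ Subgroup.zpowers α)
    (hord : orderOf α = Q * e) (hrad : ∀ ℓ : ℕ, ℓ.Prime → ℓ ∣ N → ℓ ∣ Q) {u ξ : G}
    (hu : u ^ e = 1) (hξ : IsNFree α ξ N) :
    IsNFree α (u * ξ) N := by
  obtain ⟨j, rfl, hQj⟩ := exists_pow_eq_dvd_of_pow_eq_one hα hord hu
  obtain ⟨k, hk, rfl⟩ := hξ
  refine ⟨j + k, Nat.coprime_of_dvd fun ℓ hℓ hℓjk hℓN => ?_, by rw [pow_add]⟩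
  have hℓk : ℓ ∣ k := (Nat.dvd_add_right ((hrad ℓ hℓ hℓN).trans hQj)).mp hℓjk
  exact hℓ.one_lt.ne' (Nat.eq_one_of_dvd_coprimes hk hℓk hℓN)

lemma isNFree_mul_iff_of_pow_eq_one (hα : ∀ x : G, x ∈ Subgroup.zpowers α)
    (hord : orderOf α = Q * e) (hrad : ∀ ℓ : ℕ, ℓ.Prime → ℓ ∣ N → ℓ ∣ Q) {u ξ : G}
    (hu : u ^ e = 1) :
    IsNFree α (u * ξ) N ↔ IsNFree α ξ N := by
  refine ⟨fun h => ?_, IsNFree.mul_of_pow_eq_one hα hord hrad hu⟩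
  have := IsNFree.mul_of_pow_eq_one hα hord hrad (by rw [inv_pow, hu, inv_one]) h
  rwa [inv_mul_cancel_left] at this

end CyclicGroup

section FiniteField

variable {F L : Type} [Field F] [Field L] [Algebra F L]

lemma algebraTrace_units_map_mul (a : Fˣ) (ξ : Lˣ) :
    Algebra.trace F L ((Units.map (algebraMap F L).toMonoidHom a * ξ : Lˣ) : L) =
      a * Algebra.trace F L (ξ : L) := by
  rw [Units.val_mul, Units.coe_map]
  change Algebra.trace F L (algebraMap F L a * ξ) = _
  rw [← Algebra.smul_def, map_smul, smul_eq_mul]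

variable [Fintype L]

lemma zcount_eq_card (α : Lˣ) (N : ℕ) (c : F) :
    Zcount F L α N c =
      #(univ.filter fun ξ : Lˣ => IsNFree α ξ N ∧ Algebra.trace F L (ξ : L) = c) := by
  rw [Zcount, ← Set.ncard_coe_finset, coe_filter_univ]

variable [Fintype F]

lemma sum_zcount (α : Lˣ) (N : ℕ) :
    ∑ c : F, Zcount F L α N c = #(univ.filter fun ξ : Lˣ => IsNFree α ξ N) := by
  simp only [zcount_eq_card, ← filter_filter]
  exact (card_eq_sum_card_fiberwise fun _ _ => mem_univ _).symm

lemma zcount_units_mul {α : Lˣ} (hα : ∀ x : Lˣ, x ∈ Subgroup.zpowers α) {N Q e : ℕ}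
    (hord : orderOf α = Q * e) (hcard : Fintype.card F - 1 ∣ e)
    (hrad : ∀ ℓ : ℕ, ℓ.Prime → ℓ ∣ N → ℓ ∣ Q) (a : Fˣ) (c : F) :
    Zcount F L α N (a * c) = Zcount F L α N c := by
  set u : Lˣ := Units.map (algebraMap F L).toMonoidHom a
  have hu : u⁻¹ ^ e = 1 := by
    obtain ⟨k, rfl⟩ := hcard
    rw [pow_mul, ← map_inv, ← map_pow, ← Fintype.card_units, pow_card_eq_one, map_one, one_pow]
  have himage : (u * ·) '' {ξ : Lˣ | IsNFree α ξ N ∧ Algebra.trace F L (ξ : L) = c} =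
      {ξ : Lˣ | IsNFree α ξ N ∧ Algebra.trace F L (ξ : L) = a * c} := by
    ext ξ
    rw [Set.image_mul_left, Set.mem_preimage, Set.mem_ofPred_eq, Set.mem_ofPred_eq,
      isNFree_mul_iff_of_pow_eq_one hα hord hrad hu, ← map_inv, algebraTrace_units_map_mul,
      Units.inv_mul_eq_iff_eq_mul]
  rw [Zcount, Zcount, ← himage, Set.ncard_image_of_injective _ (mul_right_injective u)]

lemma zcount_eq_of_ne_zero {α : Lˣ} (hα : ∀ x : Lˣ, x ∈ Subgroup.zpowers α) {N Q e : ℕ}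
    (hord : orderOf α = Q * e) (hcard : Fintype.card F - 1 ∣ e)
    (hrad : ∀ ℓ : ℕ, ℓ.Prime → ℓ ∣ N → ℓ ∣ Q) {c c' : F} (hc : c ≠ 0) (hc' : c' ≠ 0) :
    Zcount F L α N c = Zcount F L α N c' := by
  have h := zcount_units_mul hα hord hcard hrad (Units.mk0 (c / c') (div_ne_zero hc hc')) c'
  rwa [Units.val_mk0, div_mul_cancel₀ c hc'] at h

end FiniteField

section DeltaSum

variable (p : ℕ) {L : Type} [Field L] [Fintype L] [CharP L p]

lemma deltaSum_zero_eq_sum_isNFree {α : Lˣ} (hα : ∀ x : Lˣ, x ∈ Subgroup.zpowers α) {N : ℕ}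
    (hN : N ∣ orderOf α) :
    DeltaSum p L α N 0 = ∑ ξ : Lˣ with IsNFree α ξ N, canChar p L ξ := by
  have hN0 : N ≠ 0 := (Nat.pos_of_dvd_of_pos hN (orderOf_pos α)).ne'
  simp only [DeltaSum, gaussPeriod, zpow_zero, one_mul, mul_sum, sum_filter]
  rw [sum_comm]
  refine sum_congr rfl fun ξ _ => ?_
  obtain ⟨k, rfl⟩ := exists_pow_eq_of_mem_zpowers hα ξ
  have hclass : ∀ d ∈ N.divisors, (∃ i : ℕ, α ^ k = (α ^ d) ^ i) ↔ d ∣ k := fun d hd =>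
    exists_pow_eq_pow_pow_iff ((Nat.dvd_of_mem_divisors hd).trans hN) k
  rw [sum_congr rfl fun d hd => by rw [if_congr (hclass d hd) rfl rfl, mul_ite, mul_zero],
    ← sum_filter, ← sum_mul, sum_divisors_filter_dvd_moebius hN0, isNFree_pow_iff hN, ite_mul,
    one_mul, zero_mul]
  congr

variable [Fact p.Prime] {F : Type} [Field F] [Fintype F] [CharP F p] [Algebra F L]

lemma deltaSum_zero_eq_sum_zcount_mul {α : Lˣ} (hα : ∀ x : Lˣ, x ∈ Subgroup.zpowers α) {N : ℕ}
    (hN : N ∣ orderOf α) :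
    DeltaSum p L α N 0 = ∑ c : F, (Zcount F L α N c : ℂ) * canChar p F c := by
  simp only [deltaSum_zero_eq_sum_isNFree p hα hN, canChar_algebraTrace p F L, zcount_eq_card,
    ← filter_filter, ← sum_fiberwise' _ (fun ξ : Lˣ => Algebra.trace F L (ξ : L)), sum_const,
    nsmul_eq_mul]

lemma deltaSum_zero_eq_zcount_sub {α : Lˣ} (hα : ∀ x : Lˣ, x ∈ Subgroup.zpowers α)
    {N Q e : ℕ} (hN : N ∣ orderOf α) (hord : orderOf α = Q * e)
    (hcard : Fintype.card F - 1 ∣ e) (hrad : ∀ ℓ : ℕ, ℓ.Prime → ℓ ∣ N → ℓ ∣ Q)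
    {c₀ : F} (hc₀ : c₀ ≠ 0) :
    DeltaSum p L α N 0 = (Zcount F L α N 0 : ℂ) - Zcount F L α N c₀ := by
  rw [deltaSum_zero_eq_sum_zcount_mul p (F := F) hα hN,
    sum_mul_eq_of_eq_of_ne (b := (Zcount F L α N c₀ : ℂ))
      (fun c hc => by rw [zcount_eq_of_ne_zero hα hord hcard hrad hc hc₀]),
    sum_canChar, canChar_zero]
  ring

lemma card_mul_zcount_zero {α : Lˣ} (hα : ∀ x : Lˣ, x ∈ Subgroup.zpowers α)
    {N Q e : ℕ} (hN : N ∣ orderOf α) (hord : orderOf α = Q * e)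
    (hcard : Fintype.card F - 1 ∣ e) (hrad : ∀ ℓ : ℕ, ℓ.Prime → ℓ ∣ N → ℓ ∣ Q) :
    (Fintype.card F : ℂ) * Zcount F L α N 0 =
      #(univ.filter fun ξ : Lˣ => IsNFree α ξ N) +
        ((Fintype.card F : ℂ) - 1) * DeltaSum p L α N 0 := by
  have hsum : ∑ c : F, (Zcount F L α N c : ℂ) * 1 =
      #(univ.filter fun ξ : Lˣ => IsNFree α ξ N) := by
    simp only [mul_one]
    exact_mod_cast sum_zcount (F := F) α N
  rw [sum_mul_eq_of_eq_of_ne (b := (Zcount F L α N 1 : ℂ))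
    (fun c hc => by rw [zcount_eq_of_ne_zero hα hord hcard hrad hc one_ne_zero])] at hsum
  rw [← hsum, deltaSum_zero_eq_zcount_sub p hα hN hord hcard hrad one_ne_zero]
  simp only [sum_const, card_univ, nsmul_eq_mul, mul_one]
  ring

end DeltaSum

theorem stmt_10_general (p m q t Q N : ℕ) [Fact p.Prime] (hQ : Q = (q ^ m - 1) / (q - 1))
    (T K L : Type) [Field T] [Fintype T] [Field K] [Fintype K] [Field L] [Fintype L]
    [Algebra T K] [Algebra K L] [Algebra T L] [CharP L p]
    (hT : Fintype.card T = t) (hK : Fintype.card K = q) (hL : Fintype.card L = q ^ m)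
    (α : Lˣ) (hα : ∀ x : Lˣ, x ∈ Subgroup.zpowers α)
    (hN : N ∣ q ^ m - 1)
    (hrad : ∀ ℓ : ℕ, ℓ.Prime → ℓ ∣ N → ℓ ∣ Q) :
    (∀ ct : T, ct ≠ 0 →
      DeltaSum p L α N 0 =
        (Zcount T L α N (0 : T) : ℂ) - (Zcount T L α N ct : ℂ)) ∧
    (t ≠ q →
      DeltaSum p L α N 0 =
        ((q : ℂ) * (Zcount K L α N (0 : K) : ℂ) -
          (t : ℂ) * (Zcount T L α N (0 : T) : ℂ)) / ((q : ℂ) - (t : ℂ))) := by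
  have : CharP T p := (Algebra.charP_iff T L p).mpr inferInstance
  have : CharP K p := (Algebra.charP_iff K L p).mpr inferInstance
  have horder : orderOf α = q ^ m - 1 := by
    rw [orderOf_eq_card_of_forall_mem_zpowers hα, Nat.card_units, Nat.card_eq_fintype_card, hL]
  have hord : orderOf α = Q * (q - 1) := by
    rw [horder, hQ,
      Nat.div_mul_cancel (by simpa only [one_pow] using Nat.sub_dvd_pow_sub_pow q 1 m)]
  have hN' : N ∣ orderOf α := horder ▸ hN
  have hcardT : Fintype.card T - 1 ∣ q - 1 := by
    simpa only [Nat.card_eq_fintype_card, Fintype.card_units, hK] using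
      Subgroup.card_dvd_of_injective _ (Units.map_injective (algebraMap T K).injective)
  have hcardK : Fintype.card K - 1 ∣ q - 1 := hK ▸ dvd_rfl
  refine ⟨fun ct hct => deltaSum_zero_eq_zcount_sub p hα hN' hord hcardT hrad hct, fun htq => ?_⟩
  have hZT := card_mul_zcount_zero p hα hN' hord hcardT hrad
  have hZK := card_mul_zcount_zero p hα hN' hord hcardK hrad
  rw [hT] at hZT
  rw [hK] at hZK
  rw [eq_div_iff (sub_ne_zero.mpr (by exact_mod_cast htq.symm))]
  linear_combination hZT - hZK

/-- `Δ₀(N)` as a difference of counts over a subfield `F_t` of `F_q`. -/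
theorem stmt_10 (p s m q t Q N : ℕ) [Fact p.Prime] (hs : 0 < s) (hm : 0 < m)
    (hq : q = p ^ s) (hQ : Q = (q ^ m - 1) / (q - 1))
    (T K L : Type) [Field T] [Fintype T] [Field K] [Fintype K] [Field L] [Fintype L]
    [Algebra T K] [Algebra K L] [Algebra T L] [IsScalarTower T K L] [CharP L p]
    (hT : Fintype.card T = t) (hK : Fintype.card K = q) (hL : Fintype.card L = q ^ m)
    (α : Lˣ) (hα : ∀ x : Lˣ, x ∈ Subgroup.zpowers α)
    (hN : N ∣ q ^ m - 1)
    (hrad : ∀ ℓ : ℕ, ℓ.Prime → ℓ ∣ N → ℓ ∣ Q) :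
    (∀ ct : T, ct ≠ 0 →
      DeltaSum p L α N 0 =
        (Zcount T L α N (0 : T) : ℂ) - (Zcount T L α N ct : ℂ)) ∧
    (t ≠ q →
      DeltaSum p L α N 0 =
        ((q : ℂ) * (Zcount K L α N (0 : K) : ℂ) -
          (t : ℂ) * (Zcount T L α N (0 : T) : ℂ)) / ((q : ℂ) - (t : ℂ))) :=
  stmt_10_general p m q t Q N hQ T K L hT hK hL α hα hN hrad
end
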